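/- Differentiability over a compact dual set: let B > 0 and T := { (ξ,α) ∈ ℝ^m × ℝ^p : ‖α‖ ≤ B, ‖ξ‖ ≤ B, L^⊤α = −A^⊤ξ }. Assume F₀ : ℝ^m → ℝ is convex and its conjugate F₀* is continuous on the relevant domain. Then the function f₀(v) := max_{(ξ,α)∈T} φ(v,ξ,α), with φ(v,ξ,α) := −½‖v⊙α‖² − F₀*(ξ), is strictly differentiable at every v, with ∇f₀(v) = −v⊙α_v² for any maximiser (α_v, ξ_v) ∈ argmax_{(ξ,α)∈T} φ(v,ξ,α) (the value v⊙α_v² being independent of the chosen maximiser). -/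

import Mathlib

open Matrix

/-- The continuous linear functional `w ↦ ⟨grad, w⟩` on `ℝ^d`. -/
noncomputable def vecCLM {d : ℕ} (grad : Fin d → ℝ) : (Fin d → ℝ) →L[ℝ] ℝ :=
  LinearMap.toContinuousLinearMap (∑ j, grad j • LinearMap.proj j)

/-!
This is Danskin's theorem for a compact feasible set. The maximal value `f₀(v)` is squeezed
between the increments of `φ(·, q)` at a maximiser `q` for `v` and at a maximiser `q'` for `v'`;
since `φ(·, q)` is quadratic with coefficients bounded by `B²` uniformly on `T`, both increments
equal `∇ᵥφ(v, q)(v' - v)` up to `o(‖v' - v‖)`. Strict differentiability then only needs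
`∇ᵥφ(x, q_x) → ∇ᵥφ(v, q_v)` over maximisers `q_x`, which follows by compactness once
`∇ᵥφ(v, q) = -v ⊙ α²` is the same for all maximisers `q = (ξ, α)` at `v`. That holds because
`φ(v, ·)` is concave on the convex set `T` (`F₀*` is a supremum of affine functions) and strictly
concave in `v ⊙ α`: the midpoint of two maximisers would otherwise do better.
-/
open Filter Topology Set Function

theorem IsMaxOn.csSup_image_eq {α β : Type*} [ConditionallyCompleteLattice β] {f : α → β}
    {K : Set α} {a : α} (ha : a ∈ K) (h : IsMaxOn f K a) : sSup (f '' K) = f a :=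
  IsGreatest.csSup_eq ⟨mem_image_of_mem f ha, forall_mem_image.2 fun _ hx => h hx⟩

theorem hasStrictFDerivAt_sSup_image_of_isMaxOn {E Q : Type*} [NormedAddCommGroup E]
    [NormedSpace ℝ E] {φ : E → Q → ℝ} {K : Set Q} {D : E → Q → E →L[ℝ] ℝ} {D₀ : E →L[ℝ] ℝ}
    {v : E} (hmax : ∀ x, ∃ q ∈ K, IsMaxOn (φ x) K q)
    (hD : ∀ ε > 0, ∀ᶠ x in 𝓝 v, ∀ q ∈ K, IsMaxOn (φ x) K q → ‖D x q - D₀‖ < ε)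
    (hrem : ∀ ε > 0, ∀ᶠ p in 𝓝 (v, v), ∀ q ∈ K,
      |φ p.1 q - φ p.2 q - D p.2 q (p.1 - p.2)| ≤ ε * ‖p.1 - p.2‖) :
    HasStrictFDerivAt (fun x => sSup (φ x '' K)) D₀ v := by
  rw [hasStrictFDerivAt_iff_isLittleO, Asymptotics.isLittleO_iff]
  intro c hc
  have hε : 0 < c / 4 := by positivity
  have hswap : Tendsto Prod.swap (𝓝 (v, v)) (𝓝 (v, v)) := continuous_swap.tendsto (v, v)
  filter_upwards [(continuous_fst.tendsto (v, v)).eventually (hD _ hε),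
    (continuous_snd.tendsto (v, v)).eventually (hD _ hε),
    hrem _ hε, hswap.eventually (hrem _ hε)] with ⟨x', x⟩ hDx' hDx hrx hrx'
  obtain ⟨q, hqK, hq⟩ := hmax x
  obtain ⟨q', hq'K, hq'⟩ := hmax x'
  simp only [Prod.fst_swap, Prod.snd_swap] at hrx'
  rw [hq.csSup_image_eq hqK, hq'.csSup_image_eq hq'K, Real.norm_eq_abs]
  -- `f x' - f x` is squeezed between the increments of `φ · q` and `φ · q'`
  have hlow : φ x' q - φ x q ≤ φ x' q' - φ x q := by linarith [isMaxOn_iff.1 hq' q hqK]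
  have hupp : φ x' q' - φ x q ≤ φ x' q' - φ x q' := by linarith [isMaxOn_iff.1 hq q' hq'K]
  have hr := abs_le.1 (hrx q hqK)
  have hr' := abs_le.1 (hrx' q' hq'K)
  rw [← neg_sub x' x, map_neg, norm_neg] at hr'
  have hd := abs_le.1 (((D x q - D₀).le_opNorm (x' - x)).trans
    (mul_le_mul_of_nonneg_right (hDx q hqK hq).le (norm_nonneg _)))
  have hd' := abs_le.1 (((D x' q' - D₀).le_opNorm (x' - x)).trans
    (mul_le_mul_of_nonneg_right (hDx' q' hq'K hq').le (norm_nonneg _)))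
  simp only [_root_.sub_apply] at hd hd'
  rw [abs_le]
  constructor <;> linarith

theorem eventually_dist_lt_of_isMaxOn {E Q F : Type*} [TopologicalSpace E]
    [FirstCountableTopology E] [TopologicalSpace Q] [FirstCountableTopology Q]
    [PseudoMetricSpace F] {φ : E → Q → ℝ} {G : E → Q → F} {K : Set Q} (hK : IsCompact K)
    (hφ : ContinuousOn (uncurry φ) (univ ×ˢ K)) (hG : ContinuousOn (uncurry G) (univ ×ˢ K))
    {v : E} {G₀ : F} (hG₀ : ∀ q ∈ K, IsMaxOn (φ v) K q → G v q = G₀) {ε : ℝ} (hε : 0 < ε) :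
    ∀ᶠ x in 𝓝 v, ∀ q ∈ K, IsMaxOn (φ x) K q → dist (G x q) G₀ < ε := by
  by_contra hbad
  obtain ⟨x, hx, hxbad⟩ := exists_seq_forall_of_frequently (not_eventually.1 hbad)
  push Not at hxbad
  choose q hqK hqmax hqfar using hxbad
  obtain ⟨q₀, hq₀K, σ, hσ, hqσ⟩ := hK.tendsto_subseq hqK
  have hxσ : Tendsto (x ∘ σ) atTop (𝓝 v) := hx.comp hσ.tendsto_atTop
  have hpair : Tendsto (fun k => (x (σ k), q (σ k))) atTop (𝓝[univ ×ˢ K] (v, q₀)) :=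
    tendsto_nhdsWithin_iff.2 ⟨hxσ.prodMk_nhds hqσ, Eventually.of_forall fun k => ⟨trivial, hqK _⟩⟩
  have hq₀max : IsMaxOn (φ v) K q₀ := by
    refine isMaxOn_iff.2 fun q' hq' => le_of_tendsto_of_tendsto' ?_
      ((hφ (v, q₀) ⟨trivial, hq₀K⟩).tendsto.comp hpair) fun k => isMaxOn_iff.1 (hqmax (σ k)) q' hq'
    exact (hφ (v, q') ⟨trivial, hq'⟩).tendsto.comp
      (tendsto_nhdsWithin_iff.2 ⟨hxσ.prodMk_nhds tendsto_const_nhds,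
        Eventually.of_forall fun _ => ⟨trivial, hq'⟩⟩)
  have hlim : Tendsto (fun k => dist (G (x (σ k)) (q (σ k))) G₀) atTop (𝓝 0) := by
    simpa [hG₀ q₀ hq₀K hq₀max] using
      ((hG (v, q₀) ⟨trivial, hq₀K⟩).tendsto.comp hpair).dist (tendsto_const_nhds (x := G₀))
  exact hε.not_ge (ge_of_tendsto' hlim fun k => hqfar (σ k))

theorem hasStrictFDerivAt_sSup_image {E Q : Type*} [NormedAddCommGroup E] [NormedSpace ℝ E]
    [TopologicalSpace Q] [FirstCountableTopology Q] {φ : E → Q → ℝ} {D : E → Q → E →L[ℝ] ℝ}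
    {K : Set Q} (hK : IsCompact K) (hKne : K.Nonempty) (hφ : ContinuousOn (uncurry φ) (univ ×ˢ K))
    (hD : ContinuousOn (uncurry D) (univ ×ˢ K)) {v : E} {D₀ : E →L[ℝ] ℝ}
    (hD₀ : ∀ q ∈ K, IsMaxOn (φ v) K q → D v q = D₀)
    (hrem : ∀ ε > 0, ∀ᶠ x in 𝓝 (v, v), ∀ q ∈ K,
      |φ x.1 q - φ x.2 q - D x.2 q (x.1 - x.2)| ≤ ε * ‖x.1 - x.2‖) :
    HasStrictFDerivAt (fun x => sSup (φ x '' K)) D₀ v := by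
  refine hasStrictFDerivAt_sSup_image_of_isMaxOn (fun x => hK.exists_isMaxOn hKne ?_)
    (fun ε hε => by simpa only [dist_eq_norm] using eventually_dist_lt_of_isMaxOn hK hφ hD hD₀ hε)
    hrem
  exact hφ.comp (continuous_const.prodMk continuous_id).continuousOn fun q hq => ⟨trivial, hq⟩

theorem ConvexOn.of_coe_eq_iSup {E ι : Type*} [AddCommGroup E] [Module ℝ E] {s : Set E}
    (hs : Convex ℝ s) {f : E → ℝ} {ℓ : ι → E → ℝ} (hℓ : ∀ z, ConvexOn ℝ s (ℓ z))
    (hf : ∀ x ∈ s, (f x : EReal) = ⨆ z, (ℓ z x : EReal)) : ConvexOn ℝ s f := by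
  have hle : ∀ x ∈ s, ∀ z, ℓ z x ≤ f x := fun x hx z =>
    EReal.coe_le_coe_iff.1 (hf x hx ▸ le_iSup (fun z => (ℓ z x : EReal)) z)
  refine ⟨hs, fun x hx y hy a b ha hb hab => ?_⟩
  have hmem := hs hx hy ha hb hab
  refine EReal.coe_le_coe_iff.1 ((hf _ hmem).trans_le (iSup_le fun z => ?_))
  refine EReal.coe_le_coe_iff.2 (((hℓ z).2 hx hy ha hb hab).trans ?_)
  gcongr
  exacts [hle x hx z, hle y hy z]

theorem eq_of_isMaxOn_neg_half_norm_sq_sub {Q H : Type*} [AddCommGroup Q] [Module ℝ Q]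
    [NormedAddCommGroup H] [InnerProductSpace ℝ H] {K : Set Q} {F : Q → ℝ} (hF : ConvexOn ℝ K F)
    (T : Q →ₗ[ℝ] H) {q₁ q₂ : Q} (h₁ : q₁ ∈ K) (h₂ : q₂ ∈ K)
    (hm₁ : IsMaxOn (fun q => -(1/2) * ‖T q‖^2 - F q) K q₁)
    (hm₂ : IsMaxOn (fun q => -(1/2) * ‖T q‖^2 - F q) K q₂) : T q₁ = T q₂ := by
  set q := (1/2 : ℝ) • q₁ + (1/2 : ℝ) • q₂
  have hq : q ∈ K := hF.1 h₁ h₂ (by norm_num) (by norm_num) (by norm_num)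
  have hFq : F q ≤ (1/2 : ℝ) • F q₁ + (1/2 : ℝ) • F q₂ :=
    hF.2 h₁ h₂ (by norm_num) (by norm_num) (by norm_num)
  have hTq : ‖T q‖^2 = (1/4) * ‖T q₁ + T q₂‖^2 := by
    rw [map_add, map_smul, map_smul, ← smul_add, norm_smul, mul_pow]
    norm_num
  have hq₁ := isMaxOn_iff.1 hm₁ q hq
  have h₂₁ := isMaxOn_iff.1 hm₁ q₂ h₂
  have h₁₂ := isMaxOn_iff.1 hm₂ q₁ h₁
  have hpar := parallelogram_law_with_norm ℝ (T q₁) (T q₂)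
  simp only [smul_eq_mul] at hFq hq₁ h₂₁ h₁₂
  -- the midpoint gains `‖T q₁ - T q₂‖² / 8` over the common maximal value
  have hdiff : ‖T q₁ - T q₂‖^2 ≤ 0 := by linarith
  rw [← sub_eq_zero, ← norm_eq_zero]
  exact pow_eq_zero_iff two_ne_zero |>.1 (le_antisymm hdiff (sq_nonneg _))

theorem sum_mul_sum_ite_eq {ι κ R : Type*} [Fintype ι] [Fintype κ] [DecidableEq κ]
    [NonUnitalNonAssocSemiring R] (g : ι → κ) (c : κ → R) (a : ι → R) :
    ∑ j, c j * ∑ i, (if g i = j then a i else 0) = ∑ i, c (g i) * a i := by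
  simp only [Finset.mul_sum, mul_ite, mul_zero]
  rw [Finset.sum_comm]
  simp

theorem vecCLM_apply {d : ℕ} (c u : Fin d → ℝ) : vecCLM c u = ∑ j, c j * u j := by
  simp [vecCLM]

theorem continuous_vecCLM {d : ℕ} : Continuous (vecCLM : (Fin d → ℝ) → _) := by
  have : (vecCLM : (Fin d → ℝ) → _) = fun c => ∑ j, c j • ContinuousLinearMap.proj j := by
    ext c u
    simp [vecCLM_apply]
  rw [this]
  fun_prop

def euclidBall (k : ℕ) (B : ℝ) : Set (Fin k → ℝ) := {x | √(∑ i, (x i)^2) ≤ B}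

theorem euclidBall_eq_preimage (k : ℕ) (B : ℝ) :
    euclidBall k B = (EuclideanSpace.equiv (Fin k) ℝ).symm ⁻¹' Metric.closedBall 0 B := by
  ext x
  simp [euclidBall, EuclideanSpace.norm_eq]

theorem isCompact_euclidBall (k : ℕ) (B : ℝ) : IsCompact (euclidBall k B) := by
  rw [euclidBall_eq_preimage]
  exact (EuclideanSpace.equiv (Fin k) ℝ).symm.toHomeomorph.isCompact_preimage.2
    (isCompact_closedBall 0 B)

theorem convex_euclidBall (k : ℕ) (B : ℝ) : Convex ℝ (euclidBall k B) := by
  rw [euclidBall_eq_preimage]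
  exact (convex_closedBall 0 B).linear_preimage (EuclideanSpace.equiv (Fin k) ℝ).symm.toLinearMap

theorem sum_sq_le_of_mem_euclidBall {k : ℕ} {B : ℝ} {x : Fin k → ℝ} (hx : x ∈ euclidBall k B) :
    ∑ i, (x i)^2 ≤ B^2 :=
  Real.sqrt_le_iff.1 hx |>.2

theorem convexOn_of_coe_eq_conjugate {m : ℕ} {s : Set (Fin m → ℝ)} (hs : Convex ℝ s)
    {F₀ f : (Fin m → ℝ) → ℝ}
    (hf : ∀ ξ ∈ s, (f ξ : EReal) = ⨆ z, ((∑ i, ξ i * z i - F₀ z : ℝ) : EReal)) :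
    ConvexOn ℝ s f :=
  ConvexOn.of_coe_eq_iSup hs
    (fun z => (((dotProductBilin ℝ ℝ).flip z).convexOn hs).add_const (-F₀ z)) hf

section Dual

variable {n m p d : ℕ}

def dualSet (A : Matrix (Fin m) (Fin n) ℝ) (L : Matrix (Fin p) (Fin n) ℝ) (B : ℝ) :
    Set ((Fin m → ℝ) × (Fin p → ℝ)) :=
  {q | q.2 ∈ euclidBall p B ∧ q.1 ∈ euclidBall m B ∧ Lᵀ *ᵥ q.2 = -(Aᵀ *ᵥ q.1)}

theorem isCompact_dualSet (A : Matrix (Fin m) (Fin n) ℝ) (L : Matrix (Fin p) (Fin n) ℝ)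
    (B : ℝ) : IsCompact (dualSet A L B) := by
  refine ((isCompact_euclidBall m B).prod (isCompact_euclidBall p B)).of_isClosed_subset ?_
    fun q hq => ⟨hq.2.1, hq.1⟩
  exact ((isCompact_euclidBall p B).isClosed.preimage continuous_snd).inter
    (((isCompact_euclidBall m B).isClosed.preimage continuous_fst).inter
      (isClosed_eq (by fun_prop) (by fun_prop)))

theorem convex_dualSet (A : Matrix (Fin m) (Fin n) ℝ) (L : Matrix (Fin p) (Fin n) ℝ)
    (B : ℝ) : Convex ℝ (dualSet A L B) := by
  intro q₁ h₁ q₂ h₂ a b ha hb hab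
  refine ⟨convex_euclidBall p B h₁.1 h₂.1 ha hb hab,
    convex_euclidBall m B h₁.2.1 h₂.2.1 ha hb hab, ?_⟩
  simp only [Prod.snd_add, Prod.fst_add, Prod.smul_snd, Prod.smul_fst, mulVec_add, mulVec_smul,
    h₁.2.2, h₂.2.2]
  module

/-- The paper's `v ⊙ α²` is `fun j ↦ v j * groupSqNorm g α j`. -/
def groupSqNorm (g : Fin p → Fin d) (α : Fin p → ℝ) (j : Fin d) : ℝ :=
  ∑ i, if g i = j then (α i)^2 else 0

noncomputable def dualObjective (g : Fin p → Fin d) (Fst : (Fin m → ℝ) → ℝ) (x : Fin d → ℝ)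
    (q : (Fin m → ℝ) × (Fin p → ℝ)) : ℝ :=
  (-(1/2)) * (∑ i, (x (g i) * q.2 i)^2) - Fst q.1

noncomputable def dualGradient (g : Fin p → Fin d) (x : Fin d → ℝ)
    (q : (Fin m → ℝ) × (Fin p → ℝ)) : (Fin d → ℝ) →L[ℝ] ℝ :=
  vecCLM fun j => -(x j * groupSqNorm g q.2 j)

theorem continuous_dualGradient (g : Fin p → Fin d) :
    Continuous (uncurry (dualGradient (m := m) g)) := by
  refine continuous_vecCLM.comp (continuous_pi fun j => ?_)
  simp only [groupSqNorm]
  refine (continuous_apply j |>.comp continuous_fst).mul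
    (continuous_finsetSum _ fun i _ => ?_) |>.neg
  split_ifs <;> fun_prop

theorem dualGradient_apply (g : Fin p → Fin d) (x : Fin d → ℝ)
    (q : (Fin m → ℝ) × (Fin p → ℝ)) (u : Fin d → ℝ) :
    dualGradient g x q u = -∑ i, x (g i) * u (g i) * (q.2 i)^2 := by
  calc dualGradient g x q u = ∑ j, -(x j * u j) * groupSqNorm g q.2 j := by
        rw [dualGradient, vecCLM_apply]
        exact Finset.sum_congr rfl fun j _ => by ring
    _ = ∑ i, -(x (g i) * u (g i)) * (q.2 i)^2 := sum_mul_sum_ite_eq g _ _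
    _ = _ := by simp only [neg_mul, Finset.sum_neg_distrib]

theorem dualObjective_sub_sub_dualGradient (g : Fin p → Fin d) (Fst : (Fin m → ℝ) → ℝ)
    (x x' : Fin d → ℝ) (q : (Fin m → ℝ) × (Fin p → ℝ)) :
    dualObjective g Fst x' q - dualObjective g Fst x q - dualGradient g x q (x' - x)
      = -(1/2) * ∑ i, (q.2 i)^2 * (x' (g i) - x (g i))^2 := by
  rw [dualGradient_apply, dualObjective, dualObjective, Finset.mul_sum, Finset.mul_sum,
    Finset.mul_sum, sub_sub_sub_cancel_right, sub_neg_eq_add, ← Finset.sum_sub_distrib,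
    ← Finset.sum_add_distrib]
  refine Finset.sum_congr rfl fun i _ => ?_
  simp only [Pi.sub_apply]
  ring

theorem continuousOn_dualObjective (A : Matrix (Fin m) (Fin n) ℝ) (L : Matrix (Fin p) (Fin n) ℝ)
    {B : ℝ} (g : Fin p → Fin d) {Fst : (Fin m → ℝ) → ℝ} (hFst : ContinuousOn Fst (euclidBall m B)) :
    ContinuousOn (uncurry (dualObjective g Fst)) (univ ×ˢ dualSet A L B) := by
  refine Continuous.continuousOn (by fun_prop) |>.sub
    (hFst.comp (continuous_fst.comp continuous_snd).continuousOn fun z hz => hz.2.2.1)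

theorem abs_dualObjective_sub_sub_dualGradient_le {B : ℝ} (g : Fin p → Fin d)
    (Fst : (Fin m → ℝ) → ℝ) (x x' : Fin d → ℝ) {q : (Fin m → ℝ) × (Fin p → ℝ)}
    (hq : q.2 ∈ euclidBall p B) :
    |dualObjective g Fst x' q - dualObjective g Fst x q - dualGradient g x q (x' - x)|
      ≤ B^2 / 2 * ‖x' - x‖^2 := by
  have hcoord : ∀ i, (x' (g i) - x (g i))^2 ≤ ‖x' - x‖^2 := fun i =>
    sq_le_sq.2 (by simpa [abs_norm] using norm_le_pi_norm (x' - x) (g i))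
  have hsum : ∑ i, (q.2 i)^2 * (x' (g i) - x (g i))^2 ≤ B^2 * ‖x' - x‖^2 :=
    calc ∑ i, (q.2 i)^2 * (x' (g i) - x (g i))^2 ≤ ∑ i, (q.2 i)^2 * ‖x' - x‖^2 :=
          Finset.sum_le_sum fun i _ => mul_le_mul_of_nonneg_left (hcoord i) (sq_nonneg _)
      _ ≤ B^2 * ‖x' - x‖^2 := by
          rw [← Finset.sum_mul]
          exact mul_le_mul_of_nonneg_right (sum_sq_le_of_mem_euclidBall hq) (sq_nonneg _)
  rw [dualObjective_sub_sub_dualGradient, abs_of_nonpos]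
  · linarith
  · exact mul_nonpos_of_nonpos_of_nonneg (by norm_num)
      (Finset.sum_nonneg fun i _ => mul_nonneg (sq_nonneg _) (sq_nonneg _))

theorem eventually_abs_dualObjective_sub_sub_dualGradient_le (A : Matrix (Fin m) (Fin n) ℝ)
    (L : Matrix (Fin p) (Fin n) ℝ) (B : ℝ) (g : Fin p → Fin d) (Fst : (Fin m → ℝ) → ℝ)
    (v : Fin d → ℝ) {ε : ℝ} (hε : 0 < ε) :
    ∀ᶠ x in 𝓝 (v, v), ∀ q ∈ dualSet A L B,
      |dualObjective g Fst x.1 q - dualObjective g Fst x.2 q - dualGradient g x.2 q (x.1 - x.2)|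
        ≤ ε * ‖x.1 - x.2‖ := by
  have hlim : Tendsto (fun x : (Fin d → ℝ) × (Fin d → ℝ) => B^2 / 2 * ‖x.1 - x.2‖) (𝓝 (v, v))
      (𝓝 0) := by
    have hc : Continuous fun x : (Fin d → ℝ) × (Fin d → ℝ) => B^2 / 2 * ‖x.1 - x.2‖ := by fun_prop
    simpa using hc.tendsto (v, v)
  filter_upwards [hlim.eventually (ge_mem_nhds hε)] with x hx q hq
  calc _ ≤ B^2 / 2 * ‖x.1 - x.2‖^2 := abs_dualObjective_sub_sub_dualGradient_le g Fst _ _ hq.1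
    _ = (B^2 / 2 * ‖x.1 - x.2‖) * ‖x.1 - x.2‖ := by ring
    _ ≤ ε * ‖x.1 - x.2‖ := mul_le_mul_of_nonneg_right hx (norm_nonneg _)

theorem dualGradient_eq_of_isMaxOn (A : Matrix (Fin m) (Fin n) ℝ) (L : Matrix (Fin p) (Fin n) ℝ)
    {B : ℝ} (g : Fin p → Fin d) {Fst : (Fin m → ℝ) → ℝ} (hFst : ConvexOn ℝ (euclidBall m B) Fst)
    (v : Fin d → ℝ) {q₁ q₂ : (Fin m → ℝ) × (Fin p → ℝ)} (h₁ : q₁ ∈ dualSet A L B)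
    (h₂ : q₂ ∈ dualSet A L B) (hm₁ : IsMaxOn (dualObjective g Fst v) (dualSet A L B) q₁)
    (hm₂ : IsMaxOn (dualObjective g Fst v) (dualSet A L B) q₂) :
    dualGradient g v q₁ = dualGradient g v q₂ := by
  let T := (EuclideanSpace.equiv (Fin p) ℝ).symm.toLinearMap ∘ₗ
    (diagonal (v ∘ g)).mulVecLin ∘ₗ LinearMap.snd ℝ (Fin m → ℝ) (Fin p → ℝ)
  have hT : ∀ q i, T q i = v (g i) * q.2 i := fun q i => by simp [T, mulVec_diagonal]
  have hobj : dualObjective g Fst v = fun q => -(1/2) * ‖T q‖^2 - Fst q.1 := by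
    funext q
    simp [dualObjective, EuclideanSpace.real_norm_sq_eq, hT]
  have hconv : ConvexOn ℝ (dualSet A L B) (fun q => Fst q.1) :=
    (hFst.comp_linearMap (LinearMap.fst ℝ _ _)).subset (fun q hq => hq.2.1)
      (convex_dualSet A L B)
  rw [hobj] at hm₁ hm₂
  have hTeq := eq_of_isMaxOn_neg_half_norm_sq_sub hconv T h₁ h₂ hm₁ hm₂
  have hcoord : ∀ i, v (g i) * q₁.2 i = v (g i) * q₂.2 i := fun i => by
    rw [← hT, ← hT, hTeq]
  simp only [dualGradient, groupSqNorm, Finset.mul_sum]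
  congr 1
  funext j
  refine congrArg Neg.neg (Finset.sum_congr rfl fun i _ => ?_)
  split_ifs with hij
  · subst hij
    linear_combination (q₁.2 i + q₂.2 i) * hcoord i
  · rfl

end Dual

theorem statement6_general {n m p d : ℕ}
    (A : Matrix (Fin m) (Fin n) ℝ) (L : Matrix (Fin p) (Fin n) ℝ)
    (g : Fin p → Fin d)
    (B : ℝ)
    (F₀ : (Fin m → ℝ) → ℝ)
    (Fst : (Fin m → ℝ) → ℝ)
    (hconj : ∀ ξ : Fin m → ℝ, Real.sqrt (∑ i, (ξ i)^2) ≤ B →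
      ((Fst ξ : ℝ) : EReal)
        = ⨆ z : Fin m → ℝ, (((∑ i, ξ i * z i) - F₀ z : ℝ) : EReal))
    (hcont : ContinuousOn Fst { ξ : Fin m → ℝ | Real.sqrt (∑ i, (ξ i)^2) ≤ B })
    (v : Fin d → ℝ) :
    ∀ (ξ : Fin m → ℝ) (α : Fin p → ℝ),
      Real.sqrt (∑ i, (α i)^2) ≤ B → Real.sqrt (∑ i, (ξ i)^2) ≤ B →
      Lᵀ.mulVec α = -(Aᵀ.mulVec ξ) →
      (∀ (ξ' : Fin m → ℝ) (α' : Fin p → ℝ),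
        Real.sqrt (∑ i, (α' i)^2) ≤ B → Real.sqrt (∑ i, (ξ' i)^2) ≤ B →
        Lᵀ.mulVec α' = -(Aᵀ.mulVec ξ') →
        (-(1/2)) * (∑ i, (v (g i) * α' i)^2) - Fst ξ'
          ≤ (-(1/2)) * (∑ i, (v (g i) * α i)^2) - Fst ξ) →
      HasStrictFDerivAt
        (fun v' : Fin d → ℝ => sSup { c : ℝ |
          ∃ (ξ' : Fin m → ℝ) (α' : Fin p → ℝ),
            Real.sqrt (∑ i, (α' i)^2) ≤ B ∧ Real.sqrt (∑ i, (ξ' i)^2) ≤ B ∧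
            Lᵀ.mulVec α' = -(Aᵀ.mulVec ξ') ∧
            c = (-(1/2)) * (∑ i, (v' (g i) * α' i)^2) - Fst ξ' })
        (vecCLM (fun j => -(v j * ∑ i, if g i = j then (α i)^2 else 0))) v := by
  intro ξ α hα hξ hLc hmax
  have hmem : (ξ, α) ∈ dualSet A L B := ⟨hα, hξ, hLc⟩
  have hmax₀ : IsMaxOn (dualObjective g Fst v) (dualSet A L B) (ξ, α) :=
    isMaxOn_iff.2 fun q hq => hmax q.1 q.2 hq.1 hq.2.1 hq.2.2
  have hFst : ConvexOn ℝ (euclidBall m B) Fst :=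
    convexOn_of_coe_eq_conjugate (convex_euclidBall m B) hconj
  refine HasStrictFDerivAt.congr_of_eventuallyEq (f' := dualGradient g v (ξ, α))
    (hasStrictFDerivAt_sSup_image (isCompact_dualSet A L B) ⟨_, hmem⟩
      (continuousOn_dualObjective A L g hcont) (continuous_dualGradient g).continuousOn
      (fun q hq hmq => dualGradient_eq_of_isMaxOn A L g hFst v hq hmem hmq hmax₀)
      (fun ε hε => eventually_abs_dualObjective_sub_sub_dualGradient_le A L B g Fst v hε))
    (Eventually.of_forall fun x => congrArg sSup (ext fun c => ?_))
  exact ⟨fun ⟨q, hq, hc⟩ => ⟨q.1, q.2, hq.1, hq.2.1, hq.2.2, hc.symm⟩,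
    fun ⟨ξ', α', h₁, h₂, h₃, hc⟩ => ⟨(ξ', α'), ⟨h₁, h₂, h₃⟩, hc.symm⟩⟩

/-- Differentiability over a compact dual set.  Let `B > 0` and
`T = {(ξ,α) : ‖α‖ ≤ B, ‖ξ‖ ≤ B, L^⊤α = −A^⊤ξ}` (Euclidean norms).  Assume `F₀`
is convex and that the real-valued function `Fst` agrees with the convex
conjugate `F₀*` on the relevant domain `{‖ξ‖ ≤ B}` and is continuous there.
Then `f₀(v) = max_{(ξ,α)∈T} φ(v,ξ,α)`, with `φ(v,ξ,α) = −½‖v⊙α‖² − F₀*(ξ)`,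
is strictly differentiable at every `v`, with `∇f₀(v) = −v⊙α_v²` for any
maximiser `(ξ_v,α_v)` (coordinates `−v_j·Σ_{i : g i = j} α_i²`). -/
theorem statement6 {n m p d : ℕ}
    (A : Matrix (Fin m) (Fin n) ℝ) (L : Matrix (Fin p) (Fin n) ℝ)
    (g : Fin p → Fin d) (hg : Function.Surjective g)
    (B : ℝ) (hB : 0 < B)
    (F₀ : (Fin m → ℝ) → ℝ) (hconv : ConvexOn ℝ Set.univ F₀)
    (Fst : (Fin m → ℝ) → ℝ)
    (hconj : ∀ ξ : Fin m → ℝ, Real.sqrt (∑ i, (ξ i)^2) ≤ B →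
      ((Fst ξ : ℝ) : EReal)
        = ⨆ z : Fin m → ℝ, (((∑ i, ξ i * z i) - F₀ z : ℝ) : EReal))
    (hcont : ContinuousOn Fst { ξ : Fin m → ℝ | Real.sqrt (∑ i, (ξ i)^2) ≤ B })
    (v : Fin d → ℝ) :
    ∀ (ξ : Fin m → ℝ) (α : Fin p → ℝ),
      Real.sqrt (∑ i, (α i)^2) ≤ B → Real.sqrt (∑ i, (ξ i)^2) ≤ B →
      Lᵀ.mulVec α = -(Aᵀ.mulVec ξ) →
      (∀ (ξ' : Fin m → ℝ) (α' : Fin p → ℝ),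
        Real.sqrt (∑ i, (α' i)^2) ≤ B → Real.sqrt (∑ i, (ξ' i)^2) ≤ B →
        Lᵀ.mulVec α' = -(Aᵀ.mulVec ξ') →
        (-(1/2)) * (∑ i, (v (g i) * α' i)^2) - Fst ξ'
          ≤ (-(1/2)) * (∑ i, (v (g i) * α i)^2) - Fst ξ) →
      HasStrictFDerivAt
        (fun v' : Fin d → ℝ => sSup { c : ℝ |
          ∃ (ξ' : Fin m → ℝ) (α' : Fin p → ℝ),
            Real.sqrt (∑ i, (α' i)^2) ≤ B ∧ Real.sqrt (∑ i, (ξ' i)^2) ≤ B ∧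
            Lᵀ.mulVec α' = -(Aᵀ.mulVec ξ') ∧
            c = (-(1/2)) * (∑ i, (v' (g i) * α' i)^2) - Fst ξ' })
        (vecCLM (fun j => -(v j * ∑ i, if g i = j then (α i)^2 else 0))) v :=
  statement6_general A L g B F₀ Fst hconj hcont v
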